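/- arXiv:1807.00751 — 6 statements merged into one kernel-verified Lean document; each statement's English description precedes it below -/
import Mathlib

section
/- Let E be a real inner product space (complete, with its induced norm) and let f : E → ℝ be differentiable at every point of the segment between x and y. Suppose f is k-Lipschitz for some real k > 0 and x ≠ y are points of E with f(y) − f(x) = k·‖y − x‖. Then for every t ∈ [0,1], the gradient of f at the point x_t = x + t·(y − x) equals k·(y − x)/‖y − x‖. -/
/-!
Along the segment from `x` to `y`, the two Lipschitz bounds through an intermediate point can
only add up to `f y - f x = k ‖y - x‖` if both are equalities, so `f` is affine there with slope
`k ‖y - x‖`. Hence the gradient `g` at a point of the segment satisfies `⟪g, y - x⟫ = k ‖y - x‖`,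
while `‖g‖ ≤ k` by the Lipschitz bound; equality in Cauchy–Schwarz forces `g` to be the
multiple `(k / ‖y - x‖) • (y - x)`.
-/

open Set

theorem eq_of_norm_le_of_inner_eq_norm_sq {F : Type*} [NormedAddCommGroup F]
    [InnerProductSpace ℝ F] {g v : F} (hnorm : ‖g‖ ≤ ‖v‖) (hinner : inner ℝ g v = ‖v‖ ^ 2) :
    g = v := by
  have hsq : ‖g - v‖ ^ 2 ≤ 0 := by
    rw [norm_sub_sq_real, hinner]
    nlinarith [norm_nonneg g]
  rw [← sub_eq_zero, ← norm_eq_zero]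
  exact pow_eq_zero_iff two_ne_zero |>.1 (le_antisymm hsq (sq_nonneg _))

section Lipschitz

variable {E : Type*} [NormedAddCommGroup E] [NormedSpace ℝ E] {f : E → ℝ} {k : ℝ}

theorem apply_add_smul_sub_eq_of_sub_eq_mul_norm (hlip : ∀ u v : E, |f u - f v| ≤ k * ‖u - v‖)
    {x y : E} (hattain : f y - f x = k * ‖y - x‖) {t : ℝ} (ht : t ∈ Icc (0 : ℝ) 1) :
    f (x + t • (y - x)) = f x + t * (k * ‖y - x‖) := by
  obtain ⟨ht0, ht1⟩ := ht
  have hfirst : |f (x + t • (y - x)) - f x| ≤ k * (t * ‖y - x‖) := by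
    simpa [norm_smul, abs_of_nonneg ht0] using hlip (x + t • (y - x)) x
  have hsecond : |f y - f (x + t • (y - x))| ≤ k * ((1 - t) * ‖y - x‖) := by
    have hrest : y - (x + t • (y - x)) = (1 - t) • (y - x) := by module
    simpa [hrest, norm_smul, abs_of_nonneg (sub_nonneg.2 ht1)] using
      hlip y (x + t • (y - x))
  have := (abs_le.1 hfirst).2
  have := (abs_le.1 hsecond).2
  linarith

theorem fderiv_apply_eq_of_eqOn_line {x u : E} {a b t : ℝ} {S : Set ℝ}
    (hf : DifferentiableAt ℝ f (x + t • u)) (ht : t ∈ S) (hS : UniqueDiffWithinAt ℝ S t)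
    (hline : ∀ s ∈ S, f (x + s • u) = a + s * b) :
    fderiv ℝ f (x + t • u) u = b := by
  have hline_deriv : HasDerivAt (fun s : ℝ => x + s • u) u t := by
    simpa using ((hasDerivAt_id t).smul_const u).const_add x
  have hcomp : HasDerivWithinAt (fun s : ℝ => a + s * b) (fderiv ℝ f (x + t • u) u) S t :=
    (hf.hasFDerivAt.comp_hasDerivAt t hline_deriv).hasDerivWithinAt.congr
      (fun s hs => (hline s hs).symm) (hline t ht).symm
  have haffine : HasDerivWithinAt (fun s : ℝ => a + s * b) b S t := by
    simpa using (((hasDerivAt_id t).mul_const b).const_add a).hasDerivWithinAt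
  exact hS.eq_deriv _ hcomp haffine

end Lipschitz

theorem norm_gradient_le_of_lipschitz {E : Type*} [NormedAddCommGroup E] [InnerProductSpace ℝ E]
    [CompleteSpace E] {f : E → ℝ} {k : ℝ} (hk : 0 ≤ k)
    (hlip : ∀ u v : E, |f u - f v| ≤ k * ‖u - v‖) (p : E) : ‖gradient f p‖ ≤ k := by
  rw [gradient, LinearIsometryEquiv.norm_map]
  exact norm_fderiv_le_of_lip' ℝ hk (Filter.Eventually.of_forall fun u => hlip u p)

theorem stmt_0_general {E : Type*} [NormedAddCommGroup E] [InnerProductSpace ℝ E] [CompleteSpace E]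
    (f : E → ℝ) (k : ℝ) (x y : E) (hxy : x ≠ y)
    (hdiff : ∀ p ∈ segment ℝ x y, DifferentiableAt ℝ f p)
    (hlip : ∀ u v : E, |f u - f v| ≤ k * ‖u - v‖)
    (hattain : f y - f x = k * ‖y - x‖) :
    ∀ t ∈ Set.Icc (0 : ℝ) 1,
      gradient f (x + t • (y - x)) = (k / ‖y - x‖) • (y - x) := by
  intro t ht
  have hdist : 0 < ‖y - x‖ := norm_pos_iff.2 (sub_ne_zero.2 hxy.symm)
  have hk : 0 ≤ k := nonneg_of_mul_nonneg_left ((abs_nonneg _).trans (hlip y x)) hdist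
  have hslope : inner ℝ (gradient f (x + t • (y - x))) (y - x) = k * ‖y - x‖ := by
    rw [gradient, InnerProductSpace.toDual_symm_apply]
    refine fderiv_apply_eq_of_eqOn_line (hdiff _ ?_) ht (uniqueDiffOn_Icc zero_lt_one t ht)
      fun s hs => apply_add_smul_sub_eq_of_sub_eq_mul_norm hlip hattain hs
    rw [segment_eq_image']
    exact ⟨t, ht, rfl⟩
  have hnorm : ‖(k / ‖y - x‖) • (y - x)‖ = k := by
    rw [norm_smul, Real.norm_of_nonneg (div_nonneg hk hdist.le), div_mul_cancel₀ _ hdist.ne']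
  refine eq_of_norm_le_of_inner_eq_norm_sq ((norm_gradient_le_of_lipschitz hk hlip _).trans hnorm.ge) ?_
  rw [hnorm, real_inner_smul_right, hslope]
  field_simp

/-- Theorem 3 of the paper: if a `k`-Lipschitz function `f` on a (complete) real inner
product space attains the Lipschitz bound between `x` and `y`, i.e.
`f y - f x = k * ‖y - x‖`, and `f` is differentiable along the segment from `x` to `y`,
then the gradient of `f` at every point `x_t = x + t • (y - x)` of the segment equals
`k • (y - x) / ‖y - x‖`. -/
theorem stmt_0 {E : Type*} [NormedAddCommGroup E] [InnerProductSpace ℝ E] [CompleteSpace E]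
    (f : E → ℝ) (k : ℝ) (hk : 0 < k) (x y : E) (hxy : x ≠ y)
    (hdiff : ∀ p ∈ segment ℝ x y, DifferentiableAt ℝ f p)
    (hlip : ∀ u v : E, |f u - f v| ≤ k * ‖u - v‖)
    (hattain : f y - f x = k * ‖y - x‖) :
    ∀ t ∈ Set.Icc (0 : ℝ) 1,
      gradient f (x + t • (y - x)) = (k / ‖y - x‖) • (y - x) :=
  stmt_0_general f k x y hxy hdiff hlip hattain
end

section
/- Let E be a real normed vector space, f : E → ℝ a k-Lipschitz function (k ≥ 0), and x ≠ y points of E with f(y) − f(x) = k·‖y − x‖. If f is differentiable (Fréchet) at the point x_t = x + t·(y − x) for some t ∈ [0,1], then the derivative of f at x_t applied to the unit vector v = (y − x)/‖y − x‖ equals k; i.e., the directional derivative of f at x_t in the direction from x to y equals k. -/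
open Set

-- The Lipschitz bounds from `x` to `x_s` and from `x_s` to `y` add up to the attained one,
-- so both are equalities.
theorem apply_add_smul_sub_eq_of_lipschitz_bound_attained {E : Type*} [SeminormedAddCommGroup E]
    [NormedSpace ℝ E] {f : E → ℝ} {k : ℝ} {x y : E}
    (hlip : ∀ u v : E, |f u - f v| ≤ k * ‖u - v‖) (hattain : f y - f x = k * ‖y - x‖)
    {s : ℝ} (hs : s ∈ Icc (0 : ℝ) 1) :
    f (x + s • (y - x)) = f x + s * (f y - f x) := by
  obtain ⟨hs0, hs1⟩ := hs
  have hnorm_left : ‖x + s • (y - x) - x‖ = s * ‖y - x‖ := by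
    rw [add_sub_cancel_left, norm_smul, Real.norm_of_nonneg hs0]
  have hnorm_right : ‖y - (x + s • (y - x))‖ = (1 - s) * ‖y - x‖ := by
    rw [show y - (x + s • (y - x)) = (1 - s) • (y - x) by module, norm_smul,
      Real.norm_of_nonneg (sub_nonneg.2 hs1)]
  have hleft := (le_abs_self _).trans (hlip (x + s • (y - x)) x)
  have hright := (le_abs_self _).trans (hlip y (x + s • (y - x)))
  rw [hnorm_left] at hleft
  rw [hnorm_right] at hright
  nlinarith

theorem HasDerivAt.eq_of_eqOn_Icc {F : Type*} [NormedAddCommGroup F] [NormedSpace ℝ F]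
    {f g : ℝ → F} {f' g' : F} {a b t : ℝ} (hab : a < b) (ht : t ∈ Icc a b)
    (hf : HasDerivAt f f' t) (hg : HasDerivAt g g' t) (hfg : EqOn f g (Icc a b)) :
    f' = g' :=
  (uniqueDiffOn_Icc hab t ht).eq_deriv _ hf.hasDerivWithinAt
    (hg.hasDerivWithinAt.congr hfg (hfg ht))

theorem fderiv_apply_sub_eq_of_eqOn_segment {E : Type*} [NormedAddCommGroup E]
    [NormedSpace ℝ E] {f : E → ℝ} {x y : E} {t : ℝ} (ht : t ∈ Icc (0 : ℝ) 1)
    (hdiff : DifferentiableAt ℝ f (x + t • (y - x)))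
    (haffine : ∀ s ∈ Icc (0 : ℝ) 1, f (x + s • (y - x)) = f x + s * (f y - f x)) :
    fderiv ℝ f (x + t • (y - x)) (y - x) = f y - f x := by
  have hline : HasDerivAt (fun s : ℝ => x + s • (y - x)) (y - x) t := by
    simpa using ((hasDerivAt_id t).smul_const (y - x)).const_add x
  have haffine_deriv : HasDerivAt (fun s : ℝ => f x + s * (f y - f x)) (f y - f x) t := by
    simpa using ((hasDerivAt_id t).mul_const (f y - f x)).const_add (f x)
  exact (hdiff.hasFDerivAt.comp_hasDerivAt t hline).eq_of_eqOn_Icc zero_lt_one ht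
    haffine_deriv haffine

theorem stmt_2_general {E : Type*} [NormedAddCommGroup E] [NormedSpace ℝ E]
    (f : E → ℝ) (k : ℝ) (x y : E) (hxy : x ≠ y)
    (hlip : ∀ u v : E, |f u - f v| ≤ k * ‖u - v‖)
    (hattain : f y - f x = k * ‖y - x‖)
    (t : ℝ) (ht : t ∈ Set.Icc (0 : ℝ) 1)
    (hdiff : DifferentiableAt ℝ f (x + t • (y - x))) :
    fderiv ℝ f (x + t • (y - x)) (‖y - x‖⁻¹ • (y - x)) = k := by
  have hnorm : ‖y - x‖ ≠ 0 := norm_ne_zero_iff.2 (sub_ne_zero.2 hxy.symm)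
  have hderiv : fderiv ℝ f (x + t • (y - x)) (y - x) = k * ‖y - x‖ :=
    hattain ▸ fderiv_apply_sub_eq_of_eqOn_segment ht hdiff
      fun _ hs => apply_add_smul_sub_eq_of_lipschitz_bound_attained hlip hattain hs
  rw [map_smul, hderiv, smul_eq_mul, mul_comm k, inv_mul_cancel_left₀ hnorm]

/-- Directional-derivative step in the proof of Theorem 3 of the paper: if a `k`-Lipschitz
function `f` on a real normed space attains the Lipschitz bound between `x ≠ y`, and `f` is
Fréchet differentiable at `x_t = x + t • (y - x)` for some `t ∈ [0,1]`, then the derivative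
of `f` at `x_t` applied to the unit vector `(y - x)/‖y - x‖` equals `k`. -/
theorem stmt_2 {E : Type*} [NormedAddCommGroup E] [NormedSpace ℝ E]
    (f : E → ℝ) (k : ℝ) (hk : 0 ≤ k) (x y : E) (hxy : x ≠ y)
    (hlip : ∀ u v : E, |f u - f v| ≤ k * ‖u - v‖)
    (hattain : f y - f x = k * ‖y - x‖)
    (t : ℝ) (ht : t ∈ Set.Icc (0 : ℝ) 1)
    (hdiff : DifferentiableAt ℝ f (x + t • (y - x))) :
    fderiv ℝ f (x + t • (y - x)) (‖y - x‖⁻¹ • (y - x)) = k :=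
  stmt_2_general f k x y hxy hlip hattain t ht hdiff
end

section
/- Let X be a metric space with Borel probability measures μ and ν, and let φ, ψ : ℝ → ℝ be convex functions differentiable at a point a ∈ ℝ with φ'(a) > 0 and φ'(a) + ψ'(a) = 0. Let λ > 0, let K ≥ 0, and let f : X → ℝ be a K-Lipschitz function such that f, φ∘f are integrable with respect to μ and f, ψ∘f are integrable with respect to ν. Let W ≥ 0 be a real number such that ∫ g dν − ∫ g dμ ≤ W for every integrable 1-Lipschitz function g : X → ℝ. Then ∫ φ(f(x)) dμ(x) + ∫ ψ(f(x)) dν(x) + λ·K² ≥ φ(a) + ψ(a) − (φ'(a)·W)²/(4λ). -/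
/-!
Bounding `φ` and `ψ` below by their tangent lines at `a` (where the slopes are `φ'` and `-φ'`)
leaves `φ a + ψ a - φ' (∫ f dν - ∫ f dμ)`. Applied to `f / K`, the Kantorovich bound gives
`∫ f dν - ∫ f dμ ≤ K W`, and `φ' K W - λ K² ≤ (φ' W)² / (4λ)` by completing the square in `K`.
-/

open MeasureTheory

lemma ConvexOn.add_mul_sub_le_of_hasDerivAt {S : Set ℝ} {f : ℝ → ℝ} {f' x y : ℝ}
    (hfc : ConvexOn ℝ S f) (hx : x ∈ S) (hy : y ∈ S) (hf' : HasDerivAt f f' x) :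
    f x + f' * (y - x) ≤ f y := by
  rcases lt_trichotomy y x with hyx | rfl | hxy
  · have hslope := hfc.slope_le_of_hasDerivAt hy hx hyx hf'
    rw [slope_def_field, div_le_iff₀ (sub_pos.mpr hyx)] at hslope
    linarith
  · simp
  · have hslope := hfc.le_slope_of_hasDerivAt hx hy hxy hf'
    rw [slope_def_field, le_div_iff₀ (sub_pos.mpr hxy)] at hslope
    linarith

section

variable {X : Type*} [MeasurableSpace X] {μ ν : Measure X} [IsProbabilityMeasure μ]
  [IsProbabilityMeasure ν]

lemma ConvexOn.add_mul_integral_sub_le_integral_comp {φ : ℝ → ℝ} {a φ' : ℝ}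
    (hφc : ConvexOn ℝ Set.univ φ) (hφd : HasDerivAt φ φ' a) {f : X → ℝ}
    (hf : Integrable f μ) (hφf : Integrable (fun x => φ (f x)) μ) :
    φ a + φ' * ((∫ x, f x ∂μ) - a) ≤ ∫ x, φ (f x) ∂μ := by
  have hlinear : Integrable (fun x => φ' * (f x - a)) μ :=
    (hf.sub (integrable_const a)).const_mul φ'
  calc φ a + φ' * ((∫ x, f x ∂μ) - a) = ∫ x, φ a + φ' * (f x - a) ∂μ := by
        rw [integral_add (integrable_const _) hlinear, integral_const_mul,
          integral_sub hf (integrable_const a)]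
        simp
    _ ≤ ∫ x, φ (f x) ∂μ := integral_mono ((integrable_const _).add hlinear) hφf fun x =>
        hφc.add_mul_sub_le_of_hasDerivAt (Set.mem_univ _) (Set.mem_univ _) hφd

lemma integral_sub_integral_le_mul_of_abs_sub_le [MetricSpace X] {f : X → ℝ} {K W : ℝ}
    (hK : 0 ≤ K) (hf : ∀ u v : X, |f u - f v| ≤ K * dist u v)
    (hfμ : Integrable f μ) (hfν : Integrable f ν)
    (hW : ∀ g : X → ℝ, (∀ u v : X, |g u - g v| ≤ 1 * dist u v) →
      Integrable g μ → Integrable g ν → (∫ x, g x ∂ν) - ∫ x, g x ∂μ ≤ W) :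
    (∫ x, f x ∂ν) - ∫ x, f x ∂μ ≤ K * W := by
  rcases hK.eq_or_lt with rfl | hKpos
  · obtain ⟨x₀⟩ := nonempty_of_isProbabilityMeasure μ
    have hconst : f = fun _ => f x₀ :=
      funext fun x => sub_eq_zero.mp (abs_nonpos_iff.mp (by simpa using hf x x₀))
    rw [hconst]
    simp
  · have hg : ∀ u v : X, |f u / K - f v / K| ≤ 1 * dist u v := fun u v => by
      rw [div_sub_div_same, abs_div, abs_of_pos hKpos, div_le_iff₀ hKpos, one_mul, mul_comm]
      exact hf u v
    have := hW _ hg (hfμ.div_const K) (hfν.div_const K)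
    rwa [integral_div, integral_div, div_sub_div_same, div_le_iff₀ hKpos, mul_comm] at this

end

lemma mul_sub_mul_sq_le_sq_div {b c x : ℝ} (hc : 0 < c) :
    b * x - c * x ^ 2 ≤ b ^ 2 / (4 * c) := by
  rw [le_div_iff₀ (by positivity)]
  nlinarith [sq_nonneg (2 * c * x - b)]

theorem stmt_6_general {X : Type*} [MetricSpace X] [MeasurableSpace X]
    (μ ν : Measure X) [IsProbabilityMeasure μ] [IsProbabilityMeasure ν]
    (φ ψ : ℝ → ℝ) (hφc : ConvexOn ℝ Set.univ φ) (hψc : ConvexOn ℝ Set.univ ψ)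
    (a φ' ψ' : ℝ) (hφd : HasDerivAt φ φ' a) (hψd : HasDerivAt ψ ψ' a)
    (hφ'pos : 0 < φ') (hsum : φ' + ψ' = 0)
    (lam : ℝ) (hlam : 0 < lam) (K : ℝ) (hK : 0 ≤ K)
    (f : X → ℝ) (hf : ∀ u v : X, |f u - f v| ≤ K * dist u v)
    (hfμ : Integrable f μ) (hφfμ : Integrable (fun x => φ (f x)) μ)
    (hfν : Integrable f ν) (hψfν : Integrable (fun x => ψ (f x)) ν)
    (W : ℝ)
    (hWbound : ∀ g : X → ℝ, (∀ u v : X, |g u - g v| ≤ 1 * dist u v) →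
      Integrable g μ → Integrable g ν →
      (∫ x, g x ∂ν) - ∫ x, g x ∂μ ≤ W) :
    φ a + ψ a - (φ' * W) ^ 2 / (4 * lam) ≤
      (∫ x, φ (f x) ∂μ) + (∫ x, ψ (f x) ∂ν) + lam * K ^ 2 := by
  obtain rfl : ψ' = -φ' := by linarith
  have hφμ := hφc.add_mul_integral_sub_le_integral_comp hφd hfμ hφfμ
  have hψν := hψc.add_mul_integral_sub_le_integral_comp hψd hfν hψfν
  have hgap := mul_le_mul_of_nonneg_left
    (integral_sub_integral_le_mul_of_abs_sub_le hK hf hfμ hfν hWbound) hφ'pos.le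
  have hAMGM := mul_sub_mul_sq_le_sq_div (b := φ' * W) (x := K) hlam
  linarith

/-- Theorem 6 of the paper (Appendix G): under the objective family condition (φ, ψ convex,
differentiable at `a` with `φ'(a) > 0` and `φ'(a) + ψ'(a) = 0`), the Lipschitz-regularized
discriminator objective `∫ φ∘f dμ + ∫ ψ∘f dν + λ K²` (with `f` a `K`-Lipschitz discriminator)
is bounded below by `φ(a) + ψ(a) - (φ'(a)·W)²/(4λ)`, where `W` bounds the Kantorovich dual
form of the 1-Wasserstein distance between `ν` and `μ`. -/
theorem stmt_6 {X : Type*} [MetricSpace X] [MeasurableSpace X] [BorelSpace X]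
    (μ ν : Measure X) [IsProbabilityMeasure μ] [IsProbabilityMeasure ν]
    (φ ψ : ℝ → ℝ) (hφc : ConvexOn ℝ Set.univ φ) (hψc : ConvexOn ℝ Set.univ ψ)
    (a φ' ψ' : ℝ) (hφd : HasDerivAt φ φ' a) (hψd : HasDerivAt ψ ψ' a)
    (hφ'pos : 0 < φ') (hsum : φ' + ψ' = 0)
    (lam : ℝ) (hlam : 0 < lam) (K : ℝ) (hK : 0 ≤ K)
    (f : X → ℝ) (hf : ∀ u v : X, |f u - f v| ≤ K * dist u v)
    (hfμ : Integrable f μ) (hφfμ : Integrable (fun x => φ (f x)) μ)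
    (hfν : Integrable f ν) (hψfν : Integrable (fun x => ψ (f x)) ν)
    (W : ℝ) (hW : 0 ≤ W)
    (hWbound : ∀ g : X → ℝ, (∀ u v : X, |g u - g v| ≤ 1 * dist u v) →
      Integrable g μ → Integrable g ν →
      (∫ x, g x ∂ν) - ∫ x, g x ∂μ ≤ W) :
    φ a + ψ a - (φ' * W) ^ 2 / (4 * lam) ≤
      (∫ x, φ (f x) ∂μ) + (∫ x, ψ (f x) ∂ν) + lam * K ^ 2 :=
  stmt_6_general μ ν φ ψ hφc hψc a φ' ψ' hφd hψd hφ'pos hsum lam hlam K hK f hf hfμ hφfμ hfν hψfν W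
    hWbound
end

section
/- Let φ, ψ : ℝ → ℝ be differentiable convex functions with φ'(t) > 0 for all t and ψ'(t) < 0 for all t, and suppose there exists a ∈ ℝ with φ'(a) + ψ'(a) = 0. Then for every β ≥ 0, the function J(α) = φ(α) + ψ(α + β) is convex and attains a global minimum: there exists α₀ ∈ ℝ such that φ(α₀) + ψ(α₀ + β) ≤ φ(α) + ψ(α + β) for all α ∈ ℝ. -/
/-!
`J'(α) = φ'(α) + ψ'(α + β)` is monotone, and since `φ'` and `ψ'` are monotone and `β ≥ 0`,
`J'(a - β) ≤ φ'(a) + ψ'(a) = 0 ≤ J'(a)`. By Darboux's theorem `J'` vanishes somewhere, and a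
critical point of a convex function is a global minimum.
-/

open Set

namespace ConvexOn

variable {f : ℝ → ℝ}

lemma monotone_deriv (hf : ConvexOn ℝ univ f) (hfd : Differentiable ℝ f) : Monotone (deriv f) :=
  monotoneOn_univ.mp (hf.monotoneOn_deriv fun x _ => hfd x)

lemma isMinOn_univ_of_deriv_eq_zero (hf : ConvexOn ℝ univ f) {c : ℝ}
    (hfd : DifferentiableAt ℝ f c) (hc : deriv f c = 0) : IsMinOn f univ c :=
  hf.isMinOn_of_rightDeriv_eq_zero (by simp) <| by
    rw [hfd.derivWithin (uniqueDiffWithinAt_Ioi c), hc]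

lemma exists_isMinOn_univ_of_deriv_nonpos_of_nonneg (hf : ConvexOn ℝ univ f)
    (hfd : Differentiable ℝ f) {x y : ℝ} (hx : deriv f x ≤ 0) (hy : 0 ≤ deriv f y) :
    ∃ c, IsMinOn f univ c := by
  obtain ⟨c, -, hc⟩ : 0 ∈ deriv f '' univ :=
    (ordConnected_univ.image_deriv fun t _ => hfd t).out (mem_image_of_mem _ (mem_univ x))
      (mem_image_of_mem _ (mem_univ y)) ⟨hx, hy⟩
  exact ⟨c, hf.isMinOn_univ_of_deriv_eq_zero (hfd c) hc⟩

end ConvexOn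

theorem stmt_7_general (φ ψ : ℝ → ℝ) (hφd : Differentiable ℝ φ) (hψd : Differentiable ℝ ψ)
    (hφc : ConvexOn ℝ Set.univ φ) (hψc : ConvexOn ℝ Set.univ ψ)
    (a : ℝ) (ha : deriv φ a + deriv ψ a = 0)
    (β : ℝ) (hβ : 0 ≤ β) :
    ConvexOn ℝ Set.univ (fun α : ℝ => φ α + ψ (α + β)) ∧
    ∃ α₀ : ℝ, ∀ α : ℝ, φ α₀ + ψ (α₀ + β) ≤ φ α + ψ (α + β) := by
  set J : ℝ → ℝ := fun α => φ α + ψ (α + β)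
  have hJ' (t : ℝ) : HasDerivAt J (deriv φ t + deriv ψ (t + β)) t :=
    (hφd t).hasDerivAt.add ((hψd (t + β)).hasDerivAt.comp_add_const t β)
  have hJd : Differentiable ℝ J := fun t => (hJ' t).differentiableAt
  have hφm := hφc.monotone_deriv hφd
  have hψm := hψc.monotone_deriv hψd
  have hJc : ConvexOn ℝ univ J := Monotone.convexOn_univ_of_deriv hJd fun x y hxy => by
    rw [(hJ' x).deriv, (hJ' y).deriv]
    exact add_le_add (hφm hxy) (hψm (add_le_add_left hxy β))
  have hleft : deriv J (a - β) ≤ 0 := by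
    rw [(hJ' _).deriv, sub_add_cancel]
    linarith [hφm (sub_le_self a hβ)]
  have hright : 0 ≤ deriv J a := by
    rw [(hJ' _).deriv]
    linarith [hψm (le_add_of_nonneg_right hβ : a ≤ a + β)]
  obtain ⟨α₀, hmin⟩ := hJc.exists_isMinOn_univ_of_deriv_nonpos_of_nonneg hJd hleft hright
  exact ⟨hJc, α₀, fun α => hmin (mem_univ α)⟩

/-- Lemma 3 of the paper (Appendix G): if `φ` is differentiable, convex with `φ' > 0`
everywhere, `ψ` is differentiable, convex with `ψ' < 0` everywhere, and
`φ'(a) + ψ'(a) = 0` for some `a`, then for every `β ≥ 0` the two-point discriminator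
objective `J(α) = φ(α) + ψ(α + β)` is convex and attains a global minimum. -/
theorem stmt_7 (φ ψ : ℝ → ℝ) (hφd : Differentiable ℝ φ) (hψd : Differentiable ℝ ψ)
    (hφc : ConvexOn ℝ Set.univ φ) (hψc : ConvexOn ℝ Set.univ ψ)
    (hφ' : ∀ t : ℝ, 0 < deriv φ t) (hψ' : ∀ t : ℝ, deriv ψ t < 0)
    (a : ℝ) (ha : deriv φ a + deriv ψ a = 0)
    (β : ℝ) (hβ : 0 ≤ β) :
    ConvexOn ℝ Set.univ (fun α : ℝ => φ α + ψ (α + β)) ∧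
    ∃ α₀ : ℝ, ∀ α : ℝ, φ α₀ + ψ (α₀ + β) ≤ φ α + ψ (α + β) :=
  stmt_7_general φ ψ hφd hψd hφc hψc a ha β hβ
end

section
/- Let p > 0 and q > 0 be real numbers. The function F(t) = p·log(1 + exp(t)) + q·log(1 + exp(−t)) on ℝ attains its unique global minimum at t* = log(q/p); that is, for every t ≠ log(q/p), F(log(q/p)) < F(t). -/
/-!
The derivative of `F` is `(p eᵗ - q) / (1 + eᵗ)`, whose sign is that of `t - log (q / p)`.
Hence `F` strictly decreases up to `log (q / p)` and strictly increases from there on.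
-/

open Real Set

noncomputable def logisticLoss (p q t : ℝ) : ℝ :=
  p * log (1 + exp t) + q * log (1 + exp (-t))

theorem hasDerivAt_logisticLoss (p q t : ℝ) :
    HasDerivAt (logisticLoss p q) ((p * exp t - q) / (1 + exp t)) t := by
  have hpos : ∀ s : ℝ, 0 < 1 + exp s := fun s => by positivity
  have hlog : ∀ s : ℝ, HasDerivAt (fun s => log (1 + exp s)) (exp s / (1 + exp s)) s :=
    fun s => ((hasDerivAt_exp s).const_add 1).log (hpos s).ne'
  have hneg := (hlog (-t)).comp t (hasDerivAt_neg t)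
  refine (((hlog t).const_mul p).add (hneg.const_mul q)).congr_deriv ?_
  rw [exp_neg]
  field_simp
  ring

theorem deriv_logisticLoss (p q t : ℝ) :
    deriv (logisticLoss p q) t = (p * exp t - q) / (1 + exp t) :=
  (hasDerivAt_logisticLoss p q t).deriv

theorem continuous_logisticLoss (p q : ℝ) : Continuous (logisticLoss p q) :=
  continuous_iff_continuousAt.2 fun t => (hasDerivAt_logisticLoss p q t).continuousAt

section

variable {p q : ℝ} (hp : 0 < p) (hq : 0 < q)
include hp hq

theorem strictAntiOn_logisticLoss : StrictAntiOn (logisticLoss p q) (Iic (log (q / p))) := by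
  refine strictAntiOn_of_deriv_neg (convex_Iic _) (continuous_logisticLoss p q).continuousOn ?_
  intro t ht
  rw [interior_Iic, mem_Iio, lt_log_iff_exp_lt (div_pos hq hp), lt_div_iff₀' hp] at ht
  rw [deriv_logisticLoss]
  exact div_neg_of_neg_of_pos (by linarith) (by positivity)

theorem strictMonoOn_logisticLoss : StrictMonoOn (logisticLoss p q) (Ici (log (q / p))) := by
  refine strictMonoOn_of_deriv_pos (convex_Ici _) (continuous_logisticLoss p q).continuousOn ?_
  intro t ht
  rw [interior_Ici, mem_Ioi, log_lt_iff_lt_exp (div_pos hq hp), div_lt_iff₀' hp] at ht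
  rw [deriv_logisticLoss]
  exact div_pos (by linarith) (by positivity)

theorem logisticLoss_log_div_lt {t : ℝ} (ht : t ≠ log (q / p)) :
    logisticLoss p q (log (q / p)) < logisticLoss p q t := by
  rcases ht.lt_or_gt with hlt | hgt
  · exact strictAntiOn_logisticLoss hp hq hlt.le self_mem_Iic hlt
  · exact strictMonoOn_logisticLoss hp hq self_mem_Ici hgt.le hgt

end

/-- The paper's claim (Table 1) that the optimal discriminative function of the
JS-divergence GAN is `f*(x) = log (P_r(x) / P_g(x))`: for fake density `p > 0` and real
density `q > 0`, the pointwise loss `F(t) = p·log(1 + eᵗ) + q·log(1 + e⁻ᵗ)` attains its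
unique global minimum at `t* = log (q / p)`. -/
theorem stmt_11 (p q : ℝ) (hp : 0 < p) (hq : 0 < q)
    (t : ℝ) (ht : t ≠ Real.log (q / p)) :
    p * Real.log (1 + Real.exp (Real.log (q / p))) +
        q * Real.log (1 + Real.exp (-(Real.log (q / p)))) <
      p * Real.log (1 + Real.exp t) + q * Real.log (1 + Real.exp (-t)) :=
  logisticLoss_log_div_lt hp hq ht
end

section
/- Let E be a real normed vector space, x ≠ y points of E, φ : ℝ → ℝ strictly increasing, ψ : ℝ → ℝ strictly decreasing, and λ > 0. Suppose f : E → ℝ is K-Lipschitz (K ≥ 0) and is optimal for the Lipschitz-regularized two-point objective, i.e., for every L ≥ 0 and every L-Lipschitz function g : E → ℝ, φ(f(x)) + ψ(f(y)) + λ·K² ≤ φ(g(x)) + ψ(g(y)) + λ·L². Then f(y) − f(x) = K·‖y − x‖; i.e., the optimal discriminator attains its Lipschitz bound between the fake point x and the real point y. -/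
/-!
Compare `f` with the cone `u ↦ f x + L‖u - x‖`, which is `L`-Lipschitz and agrees with `f` at `x`.
If `f y - f x < K‖y - x‖`, some cone beats `f`: when `f y < f x` the flat cone `L = 0` lowers
the `ψ`-term without raising the penalty; otherwise the cone through `(y, f y)` has slope
`L = (f y - f x)/‖y - x‖ < K` and lowers the penalty `λL²`.
-/

section Cone

variable {E : Type*} [SeminormedAddCommGroup E]

theorem abs_cone_sub_cone_le (x : E) (a : ℝ) {L : ℝ} (hL : 0 ≤ L) (u v : E) :
    |(a + L * ‖u - x‖) - (a + L * ‖v - x‖)| ≤ L * ‖u - v‖ := by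
  calc |(a + L * ‖u - x‖) - (a + L * ‖v - x‖)| = L * |‖u - x‖ - ‖v - x‖| := by
        rw [add_sub_add_left_eq_sub, ← mul_sub, abs_mul, abs_of_nonneg hL]
    _ ≤ L * ‖u - v‖ := by
        gcongr
        simpa only [sub_sub_sub_cancel_right] using abs_norm_sub_norm_le (u - x) (v - x)

theorem optimal_objective_le_cone {φ ψ : ℝ → ℝ} {lam K : ℝ} {f : E → ℝ} {x y : E}
    (hopt : ∀ L : ℝ, 0 ≤ L → ∀ g : E → ℝ, (∀ u v : E, |g u - g v| ≤ L * ‖u - v‖) →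
      φ (f x) + ψ (f y) + lam * K ^ 2 ≤ φ (g x) + ψ (g y) + lam * L ^ 2)
    {L : ℝ} (hL : 0 ≤ L) :
    ψ (f y) + lam * K ^ 2 ≤ ψ (f x + L * ‖y - x‖) + lam * L ^ 2 := by
  have h := hopt L hL (fun u => f x + L * ‖u - x‖) (abs_cone_sub_cone_le x (f x) hL)
  simp only [sub_self, norm_zero, mul_zero, add_zero] at h
  linarith

end Cone

theorem stmt_17_general {E : Type*} [NormedAddCommGroup E]
    (x y : E)
    (φ ψ : ℝ → ℝ) (hψ : StrictAnti ψ)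
    (lam : ℝ) (hlam : 0 < lam)
    (K : ℝ) (f : E → ℝ)
    (hf : ∀ u v : E, |f u - f v| ≤ K * ‖u - v‖)
    (hopt : ∀ L : ℝ, 0 ≤ L → ∀ g : E → ℝ, (∀ u v : E, |g u - g v| ≤ L * ‖u - v‖) →
      φ (f x) + ψ (f y) + lam * K ^ 2 ≤ φ (g x) + ψ (g y) + lam * L ^ 2) :
    f y - f x = K * ‖y - x‖ := by
  refine (abs_le.mp (hf y x)).2.eq_of_not_lt fun hlt => ?_
  rcases lt_or_ge (f y - f x) 0 with hneg | hnonneg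
  · have hcone := optimal_objective_le_cone hopt le_rfl
    simp only [zero_mul, add_zero, zero_pow two_ne_zero, mul_zero] at hcone
    have hψ_lt : ψ (f x) < ψ (f y) := hψ (by linarith)
    have : 0 ≤ lam * K ^ 2 := by positivity
    linarith
  · have hd : 0 < ‖y - x‖ := (norm_nonneg _).lt_of_ne fun h => by
      rw [← h, mul_zero] at hlt
      linarith
    set L := (f y - f x) / ‖y - x‖
    have hL : 0 ≤ L := div_nonneg hnonneg hd.le
    have hLK : L < K := (div_lt_iff₀ hd).mpr hlt
    have hcone := optimal_objective_le_cone hopt hL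
    rw [div_mul_cancel₀ _ hd.ne', add_sub_cancel] at hcone
    have : lam * L ^ 2 < lam * K ^ 2 :=
      mul_lt_mul_of_pos_left (pow_lt_pow_left₀ hLK hL two_ne_zero) hlam
    linarith

/-- Instance of Theorems 1(b) and 2 of the paper for two Dirac distributions (Appendix G):
if `f` is `K`-Lipschitz and optimal for the Lipschitz-regularized two-point objective
`φ(f x) + ψ(f y) + λ K²` (with `φ` strictly increasing, `ψ` strictly decreasing, `λ > 0`),
i.e., no `L`-Lipschitz `g` achieves a smaller objective value, then the optimal discriminator
attains its Lipschitz bound between the fake point `x` and the real point `y`: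
`f y - f x = K * ‖y - x‖`. -/
theorem stmt_17 {E : Type*} [NormedAddCommGroup E] [NormedSpace ℝ E]
    (x y : E) (hxy : x ≠ y)
    (φ ψ : ℝ → ℝ) (hφ : StrictMono φ) (hψ : StrictAnti ψ)
    (lam : ℝ) (hlam : 0 < lam)
    (K : ℝ) (hK : 0 ≤ K) (f : E → ℝ)
    (hf : ∀ u v : E, |f u - f v| ≤ K * ‖u - v‖)
    (hopt : ∀ L : ℝ, 0 ≤ L → ∀ g : E → ℝ, (∀ u v : E, |g u - g v| ≤ L * ‖u - v‖) →
      φ (f x) + ψ (f y) + lam * K ^ 2 ≤ φ (g x) + ψ (g y) + lam * L ^ 2) :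
    f y - f x = K * ‖y - x‖ :=
  stmt_17_general x y φ ψ hψ lam hlam K f hf hopt
end
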